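/- Vanishing jump moments of the elemental nonconforming bubble (first step of the proof of Lemma 1.3): let p be an even positive integer, let V₁, V₂, V₃ be affinely independent points of ℝ² with barycentric coordinates λ₁, λ₂, λ₃, and define b(x) := (1/2)(−1 + L_p(1−2λ₁(x)) + L_p(1−2λ₂(x)) + L_p(1−2λ₃(x))). Then for every pair of distinct indices i, j and every univariate polynomial q of degree at most p−1, ∫₀¹ b(V_i + t(V_j − V_i)) q(t) dt = 0. -/

import Mathlib

open MeasureTheory Polynomial

/-- The Legendre polynomial of degree `k`, via Rodrigues' formula
`L_k(x) = (1/(2^k k!)) (d/dx)^k [(x² − 1)^k]`. -/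
noncomputable def legendre (k : ℕ) : Polynomial ℝ :=
  ((2 ^ k * k.factorial : ℝ)⁻¹) •
    ((fun q : Polynomial ℝ => Polynomial.derivative q)^[k] ((Polynomial.X ^ 2 - 1) ^ k))

/-!
On the edge `V i + t • (V j - V i)` the barycentric coordinates are `λ_i = 1 - t`, `λ_j = t`
and `0` for the third index, and `L_p(1) = 1` cancels the `-1`, so `b` restricts to
`(L_p(2t - 1) + L_p(1 - 2t)) / 2`. Both summands are orthogonal on `[0, 1]` to polynomials of
degree `< p`: after an affine substitution this is the orthogonality of `L_p` on `[-1, 1]`,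
which follows from Rodrigues' formula by `p` integrations by parts, all boundary terms
vanishing because `(x² - 1)^p` has zeros of order `p` at `±1`.
-/

namespace Polynomial

variable {R : Type*} [CommRing R]

theorem X_sub_C_pow_dvd_X_sq_sub_one_pow {c : R} (hc : c ^ 2 = 1) (n : ℕ) :
    (X - C c) ^ n ∣ (X ^ 2 - 1 : R[X]) ^ n :=
  pow_dvd_pow_of_dvd ⟨X + C c, by rw [mul_comm, ← sq_sub_sq, ← C_pow, hc, C_1]⟩ n

theorem isRoot_iterate_derivative_X_sq_sub_one_pow {c : R} (hc : c ^ 2 = 1) {n k : ℕ}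
    (hk : k < n) : (derivative^[k] ((X ^ 2 - 1 : R[X]) ^ n)).IsRoot c :=
  dvd_iff_isRoot.mp <| (dvd_pow_self _ (Nat.sub_ne_zero_of_lt hk)).trans
    (pow_sub_dvd_iterate_derivative_of_pow_dvd k (X_sub_C_pow_dvd_X_sq_sub_one_pow hc n))

theorem eval_iterate_derivative_X_sub_C_pow_mul (c : R) (g : R[X]) (n : ℕ) :
    (derivative^[n] ((X - C c) ^ n * g)).eval c = n.factorial * g.eval c := by
  rw [iterate_derivative_mul, eval_finsetSum,
    Finset.sum_eq_single_of_mem _ (Finset.mem_range.mpr n.succ_pos)]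
  · simp [iterate_derivative_X_sub_pow_self]
  · intro k hk hk0
    rw [iterate_derivative_X_sub_pow, eval_smul, eval_mul, eval_smul, eval_pow,
      Nat.sub_sub_self (Finset.mem_range_succ_iff.mp hk), eval_sub, eval_X, eval_C, sub_self,
      zero_pow hk0, smul_zero, zero_mul, smul_zero]

end Polynomial

theorem legendre_eval_one (p : ℕ) : (legendre p).eval 1 = 1 := by
  have hfactor : (X ^ 2 - 1 : ℝ[X]) ^ p = (X - C 1) ^ p * (X + C 1) ^ p := by
    rw [← mul_pow, C_1]; ring
  rw [legendre, eval_smul, smul_eq_mul, hfactor, eval_iterate_derivative_X_sub_C_pow_mul]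
  simp only [eval_pow, eval_add, eval_X, eval_C]
  field_simp
  norm_num

theorem integral_iterate_derivative_mul_eq_zero {f q : ℝ[X]} {a b : ℝ} {m : ℕ}
    (ha : ∀ k < m, (derivative^[k] f).IsRoot a) (hb : ∀ k < m, (derivative^[k] f).IsRoot b)
    (hq : q.natDegree < m) :
    ∫ x in a..b, (derivative^[m] f).eval x * q.eval x = 0 := by
  induction m generalizing q with
  | zero => omega
  | succ m ih =>
    have parts := intervalIntegral.integral_mul_deriv_eq_deriv_mul
      (fun x _ => (derivative^[m] f).hasDerivAt x) (fun x _ => q.hasDerivAt x)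
      ((derivative (derivative^[m] f)).continuous.intervalIntegrable a b)
      ((derivative q).continuous.intervalIntegrable a b)
    rw [← Function.iterate_succ_apply' derivative] at parts
    rw [(ha m m.lt_succ_self).eq_zero, (hb m m.lt_succ_self).eq_zero] at parts
    rcases eq_or_ne (derivative q) 0 with hq' | hq'
    · simpa [hq'] using parts
    · have hdeg : (derivative q).natDegree < m :=
        (natDegree_derivative_lt fun h => hq' (derivative_of_natDegree_zero h)).trans_le
          (Nat.lt_succ_iff.mp hq)
      rw [ih (fun k hk => ha k (hk.trans m.lt_succ_self))
        (fun k hk => hb k (hk.trans m.lt_succ_self)) hdeg] at parts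
      linarith

theorem integral_legendre_mul_eq_zero {p : ℕ} {q : ℝ[X]} (hq : q.natDegree < p) :
    ∫ x in (-1 : ℝ)..1, (legendre p).eval x * q.eval x = 0 := by
  have hroot : ∀ c : ℝ, c ^ 2 = 1 → ∀ k < p,
      (derivative^[k] ((X ^ 2 - 1 : ℝ[X]) ^ p)).IsRoot c :=
    fun c hc k hk => isRoot_iterate_derivative_X_sq_sub_one_pow hc hk
  simp only [legendre, eval_smul, smul_eq_mul, mul_assoc]
  rw [intervalIntegral.integral_const_mul,
    integral_iterate_derivative_mul_eq_zero (hroot _ (by norm_num)) (hroot _ (by norm_num)) hq,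
    mul_zero]

theorem integral_legendre_two_mul_sub_one_mul_eq_zero {p : ℕ} {q : ℝ[X]}
    (hq : q.natDegree < p) :
    ∫ t in (0 : ℝ)..1, (legendre p).eval (2 * t - 1) * q.eval t = 0 := by
  set r : ℝ[X] := q.comp (C 2⁻¹ * X + C 2⁻¹)
  have hr : ∀ t : ℝ, r.eval (2 * t - 1) = q.eval t := fun t => by
    simp only [r, eval_comp, eval_add, eval_mul, eval_C, eval_X]
    ring_nf
  have hdeg : r.natDegree < p := by
    rwa [natDegree_comp, natDegree_linear (by norm_num), mul_one]
  simp only [← hr]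
  rw [intervalIntegral.integral_comp_mul_sub (fun x => (legendre p).eval x * r.eval x)
    two_ne_zero 1]
  norm_num [integral_legendre_mul_eq_zero hdeg]

theorem integral_legendre_one_sub_two_mul_mul_eq_zero {p : ℕ} {q : ℝ[X]}
    (hq : q.natDegree < p) :
    ∫ t in (0 : ℝ)..1, (legendre p).eval (1 - 2 * t) * q.eval t = 0 := by
  set r : ℝ[X] := q.comp (C (-1) * X + C 1)
  have hr : ∀ t : ℝ, r.eval (1 - t) = q.eval t := fun t => by
    simp only [r, eval_comp, eval_add, eval_mul, eval_C, eval_X]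
    ring_nf
  have hdeg : r.natDegree < p := by
    rwa [natDegree_comp, natDegree_linear (by norm_num), mul_one]
  calc ∫ t in (0 : ℝ)..1, (legendre p).eval (1 - 2 * t) * q.eval t
      = ∫ t in (0 : ℝ)..1, (legendre p).eval (2 * (1 - t) - 1) * r.eval (1 - t) := by
        simp only [hr]
        ring_nf
    _ = ∫ t in (0 : ℝ)..1, (legendre p).eval (2 * t - 1) * r.eval t := by
        rw [intervalIntegral.integral_comp_sub_left
          (fun t => (legendre p).eval (2 * t - 1) * r.eval t)]
        norm_num
    _ = 0 := integral_legendre_two_mul_sub_one_mul_eq_zero hdeg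

theorem AffineMap.apply_add_smul_sub {k E : Type*} [CommRing k] [AddCommGroup E] [Module k E]
    (f : E →ᵃ[k] k) (x y : E) (t : k) :
    f (x + t • (y - x)) = (1 - t) * f x + t * f y := by
  rw [add_comm, ← AffineMap.lineMap_apply_module', AffineMap.apply_lineMap,
    AffineMap.lineMap_apply_ring']
  ring

theorem elemental_bubble_vanishing_moments_general (p : ℕ) (hp_pos : 0 < p)
    (V : Fin 3 → (Fin 2 → ℝ))
    (lam : Fin 3 → ((Fin 2 → ℝ) →ᵃ[ℝ] ℝ))
    (hlam : ∀ i j : Fin 3, lam i (V j) = if i = j then 1 else 0)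
    (b : (Fin 2 → ℝ) → ℝ)
    (hb : ∀ x : Fin 2 → ℝ, b x = (1 / 2 : ℝ) *
      (-1 + (legendre p).eval (1 - 2 * lam 0 x) + (legendre p).eval (1 - 2 * lam 1 x) +
        (legendre p).eval (1 - 2 * lam 2 x))) :
    ∀ i j : Fin 3, i ≠ j → ∀ q : Polynomial ℝ, q.natDegree ≤ p - 1 →
      ∫ t in (0:ℝ)..1, b (V i + t • (V j - V i)) * q.eval t = 0 := by
  intro i j hij q hq
  have hqp : q.natDegree < p := by omega
  have hb_edge : ∀ t : ℝ, b (V i + t • (V j - V i)) =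
      2⁻¹ * ((legendre p).eval (2 * t - 1) + (legendre p).eval (1 - 2 * t)) := by
    intro t
    simp only [hb, AffineMap.apply_add_smul_sub, hlam]
    fin_cases i <;> fin_cases j <;> simp [legendre_eval_one, Fin.ext_iff] at hij ⊢ <;> ring_nf
  simp only [hb_edge, mul_add, add_mul, mul_assoc]
  rw [intervalIntegral.integral_add (Continuous.intervalIntegrable (by fun_prop) _ _)
      (Continuous.intervalIntegrable (by fun_prop) _ _),
    intervalIntegral.integral_const_mul, intervalIntegral.integral_const_mul,
    integral_legendre_two_mul_sub_one_mul_eq_zero hqp,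
    integral_legendre_one_sub_two_mul_mul_eq_zero hqp, mul_zero, add_zero]

/-- Vanishing jump moments of the elemental nonconforming bubble: for even `p`, the edge
moments of `b = (1/2)(−1 + Σᵢ L_p(1−2λᵢ))` against all univariate polynomials of degree at
most `p − 1` vanish. -/
theorem elemental_bubble_vanishing_moments (p : ℕ) (hp_pos : 0 < p) (hp_even : Even p)
    (V : Fin 3 → (Fin 2 → ℝ)) (hV : AffineIndependent ℝ V)
    (lam : Fin 3 → ((Fin 2 → ℝ) →ᵃ[ℝ] ℝ))
    (hlam : ∀ i j : Fin 3, lam i (V j) = if i = j then 1 else 0)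
    (b : (Fin 2 → ℝ) → ℝ)
    (hb : ∀ x : Fin 2 → ℝ, b x = (1 / 2 : ℝ) *
      (-1 + (legendre p).eval (1 - 2 * lam 0 x) + (legendre p).eval (1 - 2 * lam 1 x) +
        (legendre p).eval (1 - 2 * lam 2 x))) :
    ∀ i j : Fin 3, i ≠ j → ∀ q : Polynomial ℝ, q.natDegree ≤ p - 1 →
      ∫ t in (0:ℝ)..1, b (V i + t • (V j - V i)) * q.eval t = 0 :=
  elemental_bubble_vanishing_moments_general p hp_pos V lam hlam b hb
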